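/- arXiv:2603.05814 — 3 statements merged into one kernel-verified Lean document; each statement's English description precedes it below -/
import Mathlib

section
/- Suppose x, d ∈ ℝⁿ satisfy ψ_x(d) < 0 (i.e., d is a descent direction for all the interval objectives G_i at x), and suppose each objective is bounded below along the ray from x in direction d: for every i there exist reals A̲_i, A̅_i with G̲_i(x+td) ≥ A̲_i and G̅_i(x+td) ≥ A̅_i for all t > 0. Then for any parameters 0 < ρ < σ < 1 there exists a nonempty open interval (a,b) ⊂ (0,∞) such that every t ∈ (a,b) simultaneously satisfies the standard Wolfe conditions and the strong Wolfe conditions at x along d. -/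
open scoped BigOperators

noncomputable def pd (n : ℕ) (F : EuclideanSpace ℝ (Fin n) → ℝ)
    (x : EuclideanSpace ℝ (Fin n)) (j : Fin n) : ℝ :=
  fderiv ℝ F x (EuclideanSpace.single j (1 : ℝ))

noncomputable def glo (n : ℕ) (F H : EuclideanSpace ℝ (Fin n) → ℝ)
    (x : EuclideanSpace ℝ (Fin n)) (j : Fin n) : ℝ :=
  min (pd n F x j) (pd n H x j)

noncomputable def ghi (n : ℕ) (F H : EuclideanSpace ℝ (Fin n) → ℝ)
    (x : EuclideanSpace ℝ (Fin n)) (j : Fin n) : ℝ :=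
  max (pd n F x j) (pd n H x j)

noncomputable def gloVec (n : ℕ) (F H : EuclideanSpace ℝ (Fin n) → ℝ)
    (x : EuclideanSpace ℝ (Fin n)) : EuclideanSpace ℝ (Fin n) :=
  WithLp.toLp 2 (fun j => glo n F H x j)

noncomputable def ghiVec (n : ℕ) (F H : EuclideanSpace ℝ (Fin n) → ℝ)
    (x : EuclideanSpace ℝ (Fin n)) : EuclideanSpace ℝ (Fin n) :=
  WithLp.toLp 2 (fun j => ghi n F H x j)

noncomputable def psi (m n : ℕ) (Gl Gu : Fin m → EuclideanSpace ℝ (Fin n) → ℝ)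
    (x v : EuclideanSpace ℝ (Fin n)) : ℝ :=
  ⨆ i : Fin m, (1 / 2 : ℝ) *
    ((∑ j : Fin n, (glo n (Gl i) (Gu i) x j + ghi n (Gl i) (Gu i) x j) * v j) +
     (∑ j : Fin n, (ghi n (Gl i) (Gu i) x j - glo n (Gl i) (Gu i) x j) * |v j|))

def LevelSet (m n : ℕ) (Gl Gu : Fin m → EuclideanSpace ℝ (Fin n) → ℝ)
    (x0 : EuclideanSpace ℝ (Fin n)) : Set (EuclideanSpace ℝ (Fin n)) :=
  {x | ∀ i : Fin m, Gl i x ≤ Gl i x0 ∧ Gu i x ≤ Gu i x0}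

def StdWolfe (m n : ℕ) (Gl Gu : Fin m → EuclideanSpace ℝ (Fin n) → ℝ)
    (ρ σ : ℝ) (x d : EuclideanSpace ℝ (Fin n)) (t : ℝ) : Prop :=
  (∀ i : Fin m,
      Gl i (x + t • d) ≤ Gl i x + ρ * t * psi m n Gl Gu x d ∧
      Gu i (x + t • d) ≤ Gu i x + ρ * t * psi m n Gl Gu x d) ∧
  σ * psi m n Gl Gu x d ≤ psi m n Gl Gu (x + t • d) d

def StrongWolfe (m n : ℕ) (Gl Gu : Fin m → EuclideanSpace ℝ (Fin n) → ℝ)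
    (ρ σ : ℝ) (x d : EuclideanSpace ℝ (Fin n)) (t : ℝ) : Prop :=
  (∀ i : Fin m,
      Gl i (x + t • d) ≤ Gl i x + ρ * t * psi m n Gl Gu x d ∧
      Gu i (x + t • d) ≤ Gu i x + ρ * t * psi m n Gl Gu x d) ∧
  |psi m n Gl Gu (x + t • d) d| ≤ σ * |psi m n Gl Gu x d|

def AssumptionA1 (m n : ℕ) (Gl Gu : Fin m → EuclideanSpace ℝ (Fin n) → ℝ)
    (x0 : EuclideanSpace ℝ (Fin n)) : Prop :=
  ∀ i : Fin m, ∃ L : ℝ, 0 < L ∧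
    ∀ y ∈ LevelSet m n Gl Gu x0, ∀ z ∈ LevelSet m n Gl Gu x0,
      ‖gloVec n (Gl i) (Gu i) y - gloVec n (Gl i) (Gu i) z‖ ≤ L * ‖y - z‖ ∧
      ‖ghiVec n (Gl i) (Gu i) y - ghiVec n (Gl i) (Gu i) z‖ ≤ L * ‖y - z‖

def AssumptionA2 (m n : ℕ) (Gl Gu : Fin m → EuclideanSpace ℝ (Fin n) → ℝ)
    (x0 : EuclideanSpace ℝ (Fin n)) : Prop :=
  ∀ y : ℕ → EuclideanSpace ℝ (Fin n),
    (∀ k, y k ∈ LevelSet m n Gl Gu x0) →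
    (∀ (i : Fin m) (k : ℕ), Gl i (y (k+1)) ≤ Gl i (y k) ∧ Gu i (y (k+1)) ≤ Gu i (y k)) →
    ∀ i : Fin m, (∃ Cl : ℝ, ∀ k, Cl ≤ Gl i (y k)) ∧ (∃ Cu : ℝ, ∀ k, Cu ≤ Gu i (y k))

/-!
Along the ray `t ↦ x + t • d`, the slope of every endpoint function is bounded by
`Ψ t := ψ_{x+td}(d)`, a continuous function with `Ψ 0 < 0`. Fix `K := (ρ + σ) / 2 * Ψ 0`.
If `Ψ` stayed below `K` forever, the endpoint functions would decrease at least linearly and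
could not be bounded below; so there is a first time `t₀ > 0` with `Ψ t₀ = K`. Before `t₀`
all slopes are below `K`, so by the mean value theorem the Armijo condition holds strictly at
`t₀`, and `|Ψ t₀| = |K| < σ |Ψ 0|`. These strict inequalities persist on an interval around `t₀`.
-/

open Set Filter Topology

section LineSearch

variable {f f' Ψ : ℝ → ℝ} {K : ℝ}

lemma lt_add_mul_of_hasDerivAt_lt {T : ℝ} (hT : 0 < T) (hf : ∀ t, HasDerivAt f (f' t) t)
    (hlt : ∀ t ∈ Ioo 0 T, f' t < K) : f T < f 0 + K * T := by
  obtain ⟨c, hc, hslope⟩ := exists_hasDerivAt_eq_slope f f' hT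
    (fun t _ => (hf t).continuousAt.continuousWithinAt) (fun t _ => hf t)
  have := hlt c hc
  rw [hslope, sub_zero, div_lt_iff₀ hT] at this
  linarith

lemma exists_pos_le_deriv_of_bddBelow (hf : ∀ t, HasDerivAt f (f' t) t) (hK : K < 0)
    (hbdd : ∃ A, ∀ t, 0 < t → A ≤ f t) : ∃ T, 0 < T ∧ K ≤ f' T := by
  by_contra! hlt
  obtain ⟨A, hA⟩ := hbdd
  have hlin : Tendsto (fun T => f 0 + K * T) atTop atBot :=
    tendsto_atBot_add_const_left _ _ (tendsto_id.const_mul_atTop_of_neg hK)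
  obtain ⟨T, hTA, hT⟩ := ((hlin.eventually_lt_atBot A).and (eventually_gt_atTop 0)).exists
  have := lt_add_mul_of_hasDerivAt_lt hT hf fun t ht => hlt t ht.1
  linarith [hA T hT]

lemma exists_first_eq_of_lt_of_le (hΨ : Continuous Ψ) (h0 : Ψ 0 < K) {T : ℝ} (hT : 0 ≤ T)
    (hKT : K ≤ Ψ T) : ∃ t₀, 0 < t₀ ∧ Ψ t₀ = K ∧ ∀ t ∈ Ico 0 t₀, Ψ t < K := by
  have hivt : ∀ {b}, 0 ≤ b → K ≤ Ψ b → ∃ s ∈ Icc 0 b, Ψ s = K := fun hb hKb =>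
    intermediate_value_Icc hb hΨ.continuousOn ⟨h0.le, hKb⟩
  set Z := {t ∈ Icc 0 T | Ψ t = K}
  have hZ : IsCompact Z := isCompact_Icc.inter_right (isClosed_eq hΨ continuous_const)
  obtain ⟨t₀, ⟨⟨ht₀, ht₀T⟩, hΨt₀⟩, hleast⟩ := hZ.exists_isLeast (hivt hT hKT)
  refine ⟨t₀, ht₀.lt_of_ne ?_, hΨt₀, fun t ht => lt_of_not_ge fun hKt => ?_⟩
  · rintro rfl
    exact h0.ne hΨt₀
  · obtain ⟨s, hs, hΨs⟩ := hivt ht.1 hKt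
    have : t₀ ≤ s := hleast ⟨⟨hs.1, hs.2.trans (ht.2.le.trans ht₀T)⟩, hΨs⟩
    linarith [hs.2, ht.2]

lemma eventually_lt_add_mul_of_hasDerivAt_lt {t₀ L : ℝ} (ht₀ : 0 < t₀)
    (hf : ∀ t, HasDerivAt f (f' t) t) (hlt : ∀ t ∈ Ioo 0 t₀, f' t < K) (hKL : K < L) :
    ∀ᶠ t in 𝓝 t₀, f t < f 0 + L * t := by
  have hcont : Continuous f := continuous_iff_continuousAt.2 fun t => (hf t).continuousAt
  refine hcont.continuousAt.eventually_lt (by fun_prop) ?_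
  linarith [lt_add_mul_of_hasDerivAt_lt ht₀ hf hlt, mul_lt_mul_of_pos_right hKL ht₀]

lemma exists_Ioo_of_eventually_nhds {p : ℝ → Prop} {t₀ : ℝ} (ht₀ : 0 < t₀)
    (h : ∀ᶠ t in 𝓝 t₀, p t) : ∃ a b, 0 < a ∧ a < b ∧ ∀ t ∈ Ioo a b, p t := by
  obtain ⟨l, u, ⟨hl, hu⟩, hsub⟩ := mem_nhds_iff_exists_Ioo_subset.1 h
  refine ⟨max l (t₀ / 2), u, by positivity, max_lt hl (by linarith) |>.trans hu, ?_⟩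
  exact fun t ht => hsub ⟨(le_max_left _ _).trans_lt ht.1, ht.2⟩

theorem exists_Ioo_armijo_abs_curvature {ι : Type*} [Finite ι] {f f' : ι → ℝ → ℝ}
    {ρ σ : ℝ} (hρ : 0 < ρ) (hρσ : ρ < σ) (hσ : σ < 1)
    (hf : ∀ k t, HasDerivAt (f k) (f' k t) t) (hf'Ψ : ∀ k t, f' k t ≤ Ψ t)
    (hΨ : Continuous Ψ) (hdesc : Ψ 0 < 0) (k₀ : ι) (hbdd : ∃ A, ∀ t, 0 < t → A ≤ f k₀ t) :
    ∃ a b, 0 < a ∧ a < b ∧ ∀ t ∈ Ioo a b,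
      (∀ k, f k t ≤ f k 0 + ρ * t * Ψ 0) ∧ |Ψ t| ≤ σ * |Ψ 0| := by
  set ψ := Ψ 0
  set K := (ρ + σ) / 2 * ψ with hK
  have hψK : ψ < K := by nlinarith
  have hKρ : K < ρ * ψ := by nlinarith
  have hσK : σ * ψ < K := by nlinarith
  have hK0 : K < 0 := by nlinarith
  obtain ⟨T, hT, hKT⟩ := exists_pos_le_deriv_of_bddBelow (hf k₀) hK0 hbdd
  obtain ⟨t₀, ht₀, hΨt₀, hbelow⟩ :=
    exists_first_eq_of_lt_of_le hΨ hψK hT.le (hKT.trans (hf'Ψ k₀ T))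
  have harmijo : ∀ k, ∀ᶠ t in 𝓝 t₀, f k t < f k 0 + ρ * ψ * t := fun k =>
    eventually_lt_add_mul_of_hasDerivAt_lt ht₀ (hf k)
      (fun t ht => (hf'Ψ k t).trans_lt (hbelow t (Ioo_subset_Ico_self ht))) hKρ
  have hcurv : ∀ᶠ t in 𝓝 t₀, |Ψ t| < σ * |ψ| := by
    refine (continuous_abs.comp hΨ).continuousAt.eventually_lt continuousAt_const ?_
    simp only [Function.comp_apply, hΨt₀, abs_of_neg hdesc, abs_of_neg hK0]
    linarith
  obtain ⟨a, b, ha, hab, hab'⟩ :=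
    exists_Ioo_of_eventually_nhds ht₀ ((eventually_all.2 harmijo).and hcurv)
  refine ⟨a, b, ha, hab, fun t ht => ⟨fun k => ?_, (hab' t ht).2.le⟩⟩
  linarith [(hab' t ht).1 k]

end LineSearch

lemma hasDerivAt_comp_add_smul {E : Type*} [NormedAddCommGroup E] [NormedSpace ℝ E]
    {F : E → ℝ} (hF : Differentiable ℝ F) (x d : E) (t : ℝ) :
    HasDerivAt (fun s : ℝ => F (x + s • d)) (fderiv ℝ F (x + t • d) d) t := by
  have hline : HasDerivAt (fun s : ℝ => x + s • d) d t := by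
    simpa using ((hasDerivAt_id t).smul_const d).const_add x
  exact (hF (x + t • d)).hasFDerivAt.comp_hasDerivAt t hline

lemma mul_le_half_mul_add_abs {a b p v : ℝ} (hap : a ≤ p) (hpb : p ≤ b) :
    v * p ≤ 1 / 2 * ((a + b) * v + (b - a) * |v|) := by
  rcases le_or_gt 0 v with hv | hv
  · rw [abs_of_nonneg hv]; nlinarith
  · rw [abs_of_neg hv]; nlinarith

lemma fderiv_apply_eq_sum_pd {n : ℕ} (F : EuclideanSpace ℝ (Fin n) → ℝ)
    (y v : EuclideanSpace ℝ (Fin n)) : fderiv ℝ F y v = ∑ j, v j * pd n F y j := by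
  conv_lhs => rw [← (EuclideanSpace.basisFun (Fin n) ℝ).sum_repr v]
  simp [pd, map_sum, smul_eq_mul]

section Psi

variable {m n : ℕ} {Gl Gu : Fin m → EuclideanSpace ℝ (Fin n) → ℝ}

lemma fderiv_apply_le_psi {i : Fin m} {F : EuclideanSpace ℝ (Fin n) → ℝ}
    (hF : F = Gl i ∨ F = Gu i) (y v : EuclideanSpace ℝ (Fin n)) :
    fderiv ℝ F y v ≤ psi m n Gl Gu y v := by
  have hpd : ∀ j, glo n (Gl i) (Gu i) y j ≤ pd n F y j ∧ pd n F y j ≤ ghi n (Gl i) (Gu i) y j := by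
    rcases hF with rfl | rfl <;> intro j
    exacts [⟨min_le_left _ _, le_max_left _ _⟩, ⟨min_le_right _ _, le_max_right _ _⟩]
  calc fderiv ℝ F y v = ∑ j, v j * pd n F y j := fderiv_apply_eq_sum_pd F y v
    _ ≤ 1 / 2 * ((∑ j, (glo n (Gl i) (Gu i) y j + ghi n (Gl i) (Gu i) y j) * v j) +
          ∑ j, (ghi n (Gl i) (Gu i) y j - glo n (Gl i) (Gu i) y j) * |v j|) := by
      rw [← Finset.sum_add_distrib, Finset.mul_sum]
      exact Finset.sum_le_sum fun j _ => mul_le_half_mul_add_abs (hpd j).1 (hpd j).2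
    _ ≤ psi m n Gl Gu y v := by
      unfold psi
      apply le_ciSup _ i
      exact (Set.finite_range _).bddAbove

lemma continuous_psi (hm : 0 < m) (hGl : ∀ i, ContDiff ℝ 1 (Gl i))
    (hGu : ∀ i, ContDiff ℝ 1 (Gu i)) (v : EuclideanSpace ℝ (Fin n)) :
    Continuous fun y => psi m n Gl Gu y v := by
  have : Nonempty (Fin m) := ⟨⟨0, hm⟩⟩
  have hpd : ∀ F : EuclideanSpace ℝ (Fin n) → ℝ, ContDiff ℝ 1 F → ∀ j,
      Continuous fun y => pd n F y j := fun F hF j =>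
    (hF.continuous_fderiv one_ne_zero).clm_apply continuous_const
  simp only [psi, ← Finset.sup'_univ_eq_ciSup, glo, ghi]
  refine Continuous.finset_sup'_apply _ fun i _ => ?_
  have := hpd _ (hGl i)
  have := hpd _ (hGu i)
  fun_prop

end Psi

theorem wolfe_interval_exists_general (m n : ℕ) (hm : 0 < m)
    (Gl Gu : Fin m → EuclideanSpace ℝ (Fin n) → ℝ)
    (hGl : ∀ i, ContDiff ℝ 1 (Gl i)) (hGu : ∀ i, ContDiff ℝ 1 (Gu i))
    (ρ σ : ℝ) (hρ : 0 < ρ) (hρσ : ρ < σ) (hσ : σ < 1)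
    (x d : EuclideanSpace ℝ (Fin n))
    (hdesc : psi m n Gl Gu x d < 0)
    (hbdd : ∀ i : Fin m, ∃ Al Au : ℝ, ∀ t : ℝ, 0 < t →
      Al ≤ Gl i (x + t • d) ∧ Au ≤ Gu i (x + t • d)) :
    ∃ a b : ℝ, 0 < a ∧ a < b ∧ ∀ t ∈ Set.Ioo a b,
      StdWolfe m n Gl Gu ρ σ x d t ∧ StrongWolfe m n Gl Gu ρ σ x d t := by
  set G : Fin m ⊕ Fin m → EuclideanSpace ℝ (Fin n) → ℝ := Sum.elim Gl Gu
  have hG : ∀ k, Differentiable ℝ (G k) := by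
    rintro (i | i)
    exacts [(hGl i).differentiable one_ne_zero, (hGu i).differentiable one_ne_zero]
  have hGψ : ∀ k y, fderiv ℝ (G k) y d ≤ psi m n Gl Gu y d := by
    rintro (i | i) y
    exacts [fderiv_apply_le_psi (Or.inl rfl) y d, fderiv_apply_le_psi (Or.inr rfl) y d]
  obtain ⟨Al, _, hAl⟩ := hbdd ⟨0, hm⟩
  obtain ⟨a, b, ha, hab, hwolfe⟩ := exists_Ioo_armijo_abs_curvature
    (f := fun k t => G k (x + t • d)) hρ hρσ hσ (fun k => hasDerivAt_comp_add_smul (hG k) x d)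
    (fun k t => hGψ k _) ((continuous_psi hm hGl hGu d).comp (by fun_prop))
    (by simpa using hdesc) (.inl ⟨0, hm⟩) ⟨Al, fun t ht => (hAl t ht).1⟩
  refine ⟨a, b, ha, hab, fun t ht => ?_⟩
  obtain ⟨harmijo, hcurv⟩ := hwolfe t ht
  simp only [zero_smul, add_zero] at harmijo hcurv
  have hsuff := fun i => And.intro (harmijo (.inl i)) (harmijo (.inr i))
  refine ⟨⟨hsuff, ?_⟩, hsuff, hcurv⟩
  rw [abs_of_neg hdesc] at hcurv
  linarith [neg_abs_le (psi m n Gl Gu (x + t • d) d)]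

theorem wolfe_interval_exists (m n : ℕ) (hm : 0 < m) (hn : 0 < n)
    (Gl Gu : Fin m → EuclideanSpace ℝ (Fin n) → ℝ)
    (hGl : ∀ i, ContDiff ℝ 1 (Gl i)) (hGu : ∀ i, ContDiff ℝ 1 (Gu i))
    (hle : ∀ (i : Fin m) (x : EuclideanSpace ℝ (Fin n)), Gl i x ≤ Gu i x)
    (ρ σ : ℝ) (hρ : 0 < ρ) (hρσ : ρ < σ) (hσ : σ < 1)
    (x d : EuclideanSpace ℝ (Fin n))
    (hdesc : psi m n Gl Gu x d < 0)
    (hbdd : ∀ i : Fin m, ∃ Al Au : ℝ, ∀ t : ℝ, 0 < t →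
      Al ≤ Gl i (x + t • d) ∧ Au ≤ Gu i (x + t • d)) :
    ∃ a b : ℝ, 0 < a ∧ a < b ∧ ∀ t ∈ Set.Ioo a b,
      StdWolfe m n Gl Gu ρ σ x d t ∧ StrongWolfe m n Gl Gu ρ σ x d t :=
  wolfe_interval_exists_general m n hm Gl Gu hGl hGu ρ σ hρ hρσ hσ x d hdesc hbdd
end

section
/- Let μ ∈ [0,1). Suppose sequences {x^k} ⊂ ℝⁿ, {β_k}_{k≥1} ⊂ ℝ and {d^k} ⊂ ℝⁿ satisfy d⁰ = v(x⁰), d^k = v(x^k) + β_k d^{k−1} for k ≥ 1, v(x^k) ≠ 0 for all k, and for every k ≥ 1: β_k ≥ 0, and if ψ_{x^k}(d^{k−1}) > 0 then β_k·ψ_{x^k}(d^{k−1}) ≤ −μ·ψ_{x^k}(v(x^k)). Then the sufficient descent condition holds with constant c = 1−μ: for all k ≥ 0, ψ_{x^k}(d^k) ≤ (1−μ)·ψ_{x^k}(v(x^k)) < 0. -/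
open scoped BigOperators

/-!
For fixed `x`, each term of `ψ_x` is the support function of the box `[g̲_i(x), g̅_i(x)]`, so `ψ_x`
is sublinear and `ψ_x(0) = 0`; comparing `v(x)` with `0` in its defining minimisation gives
`ψ_x(v(x)) < 0`. For `k ≥ 1` sublinearity yields `ψ(d^k) ≤ ψ(v(x^k)) + β_k ψ(d^{k-1})`, and the
condition on `β_k` bounds the last term by `-μ ψ(v(x^k))`, trivially so when `ψ(d^{k-1}) ≤ 0`.
-/

open Finset

theorem iSup_le_iSup_add_mul_iSup {ι : Type*} [Finite ι] {f g h : ι → ℝ} {β : ℝ} (hβ : 0 ≤ β)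
    (hfgh : ∀ i, f i ≤ g i + β * h i) : ⨆ i, f i ≤ (⨆ i, g i) + β * ⨆ i, h i := by
  cases isEmpty_or_nonempty ι
  · simp [Real.iSup_of_isEmpty]
  · exact ciSup_le fun i => (hfgh i).trans <| add_le_add (le_ciSup (Finite.bddAbove_range g) i)
      (mul_le_mul_of_nonneg_left (le_ciSup (Finite.bddAbove_range h) i) hβ)

section BoxSupport

variable {ι : Type*} [Fintype ι]

/-- For `a ≤ b` this is the support function `v ↦ max {gᵀv | a ≤ g ≤ b}` of the box `[a, b]`. -/
noncomputable def boxSupport (a b v : ι → ℝ) : ℝ :=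
  (1 / 2) * (∑ j, (a j + b j) * v j + ∑ j, (b j - a j) * |v j|)

theorem boxSupport_zero (a b : ι → ℝ) : boxSupport a b 0 = 0 := by
  simp [boxSupport]

theorem boxSupport_add_smul_le {a b : ι → ℝ} (hab : a ≤ b) (u w : ι → ℝ) {β : ℝ} (hβ : 0 ≤ β) :
    boxSupport a b (u + β • w) ≤ boxSupport a b u + β * boxSupport a b w := by
  have hlin : ∑ j, (a j + b j) * (u + β • w) j
      = ∑ j, (a j + b j) * u j + β * ∑ j, (a j + b j) * w j := by
    simp only [Pi.add_apply, Pi.smul_apply, smul_eq_mul, mul_add, sum_add_distrib, mul_sum,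
      mul_left_comm]
  have habs : ∑ j, (b j - a j) * |(u + β • w) j|
      ≤ ∑ j, (b j - a j) * |u j| + β * ∑ j, (b j - a j) * |w j| := by
    rw [mul_sum, ← sum_add_distrib]
    refine sum_le_sum fun j _ => ?_
    have hwidth : 0 ≤ b j - a j := sub_nonneg.mpr (hab j)
    calc (b j - a j) * |u j + β * w j| ≤ (b j - a j) * (|u j| + β * |w j|) := by
          gcongr
          exact (abs_add_le _ _).trans_eq (by rw [abs_mul, abs_of_nonneg hβ])
      _ = (b j - a j) * |u j| + β * ((b j - a j) * |w j|) := by ring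
  unfold boxSupport
  linarith

end BoxSupport

theorem glo_le_ghi (n : ℕ) (F H : EuclideanSpace ℝ (Fin n) → ℝ) (x : EuclideanSpace ℝ (Fin n)) :
    glo n F H x ≤ ghi n F H x :=
  fun _ => min_le_max

section Psi

variable {m n : ℕ} (Gl Gu : Fin m → EuclideanSpace ℝ (Fin n) → ℝ) (x : EuclideanSpace ℝ (Fin n))

theorem psi_eq_iSup_boxSupport (v : EuclideanSpace ℝ (Fin n)) :
    psi m n Gl Gu x v = ⨆ i, boxSupport (glo n (Gl i) (Gu i) x) (ghi n (Gl i) (Gu i) x) v.ofLp :=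
  rfl

theorem psi_zero : psi m n Gl Gu x 0 = 0 := by
  simp [psi_eq_iSup_boxSupport, boxSupport_zero]

theorem psi_add_smul_le (u w : EuclideanSpace ℝ (Fin n)) {β : ℝ} (hβ : 0 ≤ β) :
    psi m n Gl Gu x (u + β • w) ≤ psi m n Gl Gu x u + β * psi m n Gl Gu x w := by
  simp only [psi_eq_iSup_boxSupport, WithLp.ofLp_add, WithLp.ofLp_smul]
  exact iSup_le_iSup_add_mul_iSup hβ fun i => boxSupport_add_smul_le (glo_le_ghi n _ _ x) _ _ hβ

theorem psi_neg_of_minimizer_ne_zero {v : EuclideanSpace ℝ (Fin n)}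
    (hmin : ∀ w, psi m n Gl Gu x v + (1 / 2) * ‖v‖ ^ 2 ≤ psi m n Gl Gu x w + (1 / 2) * ‖w‖ ^ 2)
    (hv : v ≠ 0) : psi m n Gl Gu x v < 0 := by
  have h0 := hmin 0
  rw [psi_zero, norm_zero] at h0
  have := norm_pos_iff.mpr hv
  nlinarith

end Psi

theorem sufficient_descent_general_general (m n : ℕ)
    (Gl Gu : Fin m → EuclideanSpace ℝ (Fin n) → ℝ)
    (vv : EuclideanSpace ℝ (Fin n) → EuclideanSpace ℝ (Fin n))
    (hvmin : ∀ y w : EuclideanSpace ℝ (Fin n),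
      psi m n Gl Gu y (vv y) + (1/2) * ‖vv y‖^2 ≤ psi m n Gl Gu y w + (1/2) * ‖w‖^2)
    (μ : ℝ) (hμ0 : 0 ≤ μ) (hμ1 : μ < 1)
    (x d : ℕ → EuclideanSpace ℝ (Fin n)) (β : ℕ → ℝ)
    (hd0 : d 0 = vv (x 0))
    (hdk : ∀ k : ℕ, d (k+1) = vv (x (k+1)) + β (k+1) • d k)
    (hvne : ∀ k : ℕ, vv (x k) ≠ 0)
    (hβ : ∀ k : ℕ, 0 ≤ β (k+1) ∧
      (0 < psi m n Gl Gu (x (k+1)) (d k) →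
        β (k+1) * psi m n Gl Gu (x (k+1)) (d k)
          ≤ -μ * psi m n Gl Gu (x (k+1)) (vv (x (k+1))))) :
    ∀ k : ℕ, psi m n Gl Gu (x k) (d k) ≤ (1 - μ) * psi m n Gl Gu (x k) (vv (x k)) ∧
      (1 - μ) * psi m n Gl Gu (x k) (vv (x k)) < 0 := by
  have hneg : ∀ k, psi m n Gl Gu (x k) (vv (x k)) < 0 := fun k =>
    psi_neg_of_minimizer_ne_zero Gl Gu (x k) (hvmin (x k)) (hvne k)
  intro k
  refine ⟨?_, mul_neg_of_pos_of_neg (sub_pos.mpr hμ1) (hneg k)⟩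
  cases k with
  | zero =>
    rw [hd0]
    nlinarith [hneg 0]
  | succ k =>
    obtain ⟨hβ_nonneg, hβ_bound⟩ := hβ k
    have hsub := psi_add_smul_le Gl Gu (x (k + 1)) (vv (x (k + 1))) (d k) hβ_nonneg
    have hβ_term : β (k + 1) * psi m n Gl Gu (x (k + 1)) (d k)
        ≤ -μ * psi m n Gl Gu (x (k + 1)) (vv (x (k + 1))) := by
      by_cases hpos : 0 < psi m n Gl Gu (x (k + 1)) (d k)
      · exact hβ_bound hpos
      · nlinarith [hneg (k + 1)]
    rw [hdk k]
    linarith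

theorem sufficient_descent_general (m n : ℕ) (hm : 0 < m) (hn : 0 < n)
    (Gl Gu : Fin m → EuclideanSpace ℝ (Fin n) → ℝ)
    (hGl : ∀ i, ContDiff ℝ 1 (Gl i)) (hGu : ∀ i, ContDiff ℝ 1 (Gu i))
    (hle : ∀ (i : Fin m) (x : EuclideanSpace ℝ (Fin n)), Gl i x ≤ Gu i x)
    (vv : EuclideanSpace ℝ (Fin n) → EuclideanSpace ℝ (Fin n))
    (hvmin : ∀ y w : EuclideanSpace ℝ (Fin n),
      psi m n Gl Gu y (vv y) + (1/2) * ‖vv y‖^2 ≤ psi m n Gl Gu y w + (1/2) * ‖w‖^2)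
    (μ : ℝ) (hμ0 : 0 ≤ μ) (hμ1 : μ < 1)
    (x d : ℕ → EuclideanSpace ℝ (Fin n)) (β : ℕ → ℝ)
    (hd0 : d 0 = vv (x 0))
    (hdk : ∀ k : ℕ, d (k+1) = vv (x (k+1)) + β (k+1) • d k)
    (hvne : ∀ k : ℕ, vv (x k) ≠ 0)
    (hβ : ∀ k : ℕ, 0 ≤ β (k+1) ∧
      (0 < psi m n Gl Gu (x (k+1)) (d k) →
        β (k+1) * psi m n Gl Gu (x (k+1)) (d k)
          ≤ -μ * psi m n Gl Gu (x (k+1)) (vv (x (k+1))))) :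
    ∀ k : ℕ, psi m n Gl Gu (x k) (d k) ≤ (1 - μ) * psi m n Gl Gu (x k) (vv (x k)) ∧
      (1 - μ) * psi m n Gl Gu (x k) (vv (x k)) < 0 :=
  sufficient_descent_general_general m n Gl Gu vv hvmin μ hμ0 hμ1 x d β hd0 hdk hvne hβ
end

section
/- Assume Assumption A2 holds for the initial point x⁰. Consider iterates x^{k+1} = x^k + t_k d^k for k ≥ 0, where each d^k ∈ ℝⁿ satisfies ψ_{x^k}(d^k) < 0 and each step length t_k > 0 satisfies condition (W1): G̲_i(x^k + t_k d^k) ≤ G̲_i(x^k) + ρ t_k ψ_{x^k}(d^k) and G̅_i(x^k + t_k d^k) ≤ G̅_i(x^k) + ρ t_k ψ_{x^k}(d^k) for all i, where ρ ∈ (0,1). Then Σ_{k≥0} t_k·|ψ_{x^k}(d^k)| < +∞. -/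
open scoped BigOperators

/-!
Each Armijo step lowers every endpoint function by `ρ t_k |ψ_{x^k}(d^k)| > 0`, so the iterates
form a monotone sequence in the level set `L₀`. Summing the decrease of one endpoint function
telescopes, and Assumption A2 bounds that function below along the iterates, so the partial sums
of `ρ t_k |ψ_{x^k}(d^k)|` are bounded.
-/

theorem sum_range_add_le_of_add_le {f a : ℕ → ℝ} (hstep : ∀ k, f (k + 1) + a k ≤ f k) (N : ℕ) :
    f N + ∑ k ∈ Finset.range N, a k ≤ f 0 := by
  induction N with
  | zero => simp
  | succ N ih =>
    rw [Finset.sum_range_succ]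
    linarith [hstep N]

theorem summable_of_add_le_of_forall_le {f a : ℕ → ℝ} {C : ℝ} (ha : ∀ k, 0 ≤ a k)
    (hstep : ∀ k, f (k + 1) + a k ≤ f k) (hC : ∀ k, C ≤ f k) : Summable a :=
  summable_of_sum_range_le (c := f 0 - C) ha fun N => by
    linarith [sum_range_add_le_of_add_le hstep N, hC N]

theorem mem_levelSet_of_antitone {m n : ℕ} {Gl Gu : Fin m → EuclideanSpace ℝ (Fin n) → ℝ}
    {y : ℕ → EuclideanSpace ℝ (Fin n)}
    (hy : ∀ (i : Fin m) (k : ℕ), Gl i (y (k + 1)) ≤ Gl i (y k) ∧ Gu i (y (k + 1)) ≤ Gu i (y k))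
    (k : ℕ) : y k ∈ LevelSet m n Gl Gu (y 0) := by
  induction k with
  | zero => exact fun i => ⟨le_rfl, le_rfl⟩
  | succ k ih => exact fun i => ⟨(hy i k).1.trans (ih i).1, (hy i k).2.trans (ih i).2⟩

theorem armijo_sum_finite_general (m n : ℕ) (hm : 0 < m)
    (Gl Gu : Fin m → EuclideanSpace ℝ (Fin n) → ℝ)
    (ρ : ℝ) (hρ0 : 0 < ρ)
    (x d : ℕ → EuclideanSpace ℝ (Fin n)) (t : ℕ → ℝ)
    (hx : ∀ k : ℕ, x (k+1) = x k + t k • d k)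
    (hdesc : ∀ k : ℕ, psi m n Gl Gu (x k) (d k) < 0)
    (ht : ∀ k : ℕ, 0 < t k ∧ ∀ i : Fin m,
      Gl i (x k + t k • d k) ≤ Gl i (x k) + ρ * t k * psi m n Gl Gu (x k) (d k) ∧
      Gu i (x k + t k • d k) ≤ Gu i (x k) + ρ * t k * psi m n Gl Gu (x k) (d k))
    (hA2 : AssumptionA2 m n Gl Gu (x 0)) :
    Summable (fun k : ℕ => t k * |psi m n Gl Gu (x k) (d k)|) := by
  set a : ℕ → ℝ := fun k => ρ * (t k * |psi m n Gl Gu (x k) (d k)|)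
  have ha : ∀ k, 0 ≤ a k := fun k =>
    mul_nonneg hρ0.le (mul_nonneg (ht k).1.le (abs_nonneg _))
  have hdecrease : ∀ (i : Fin m) (k : ℕ),
      Gl i (x (k + 1)) + a k ≤ Gl i (x k) ∧ Gu i (x (k + 1)) + a k ≤ Gu i (x k) := by
    intro i k
    have ha_eq : a k = -(ρ * t k * psi m n Gl Gu (x k) (d k)) := by
      simp only [a, abs_of_neg (hdesc k)]
      ring
    rw [hx k, ha_eq]
    constructor <;> linarith [((ht k).2 i).1, ((ht k).2 i).2]
  have hmono : ∀ (i : Fin m) (k : ℕ),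
      Gl i (x (k + 1)) ≤ Gl i (x k) ∧ Gu i (x (k + 1)) ≤ Gu i (x k) :=
    fun i k => ⟨by linarith [(hdecrease i k).1, ha k], by linarith [(hdecrease i k).2, ha k]⟩
  obtain ⟨⟨C, hC⟩, -⟩ := hA2 x (mem_levelSet_of_antitone hmono) hmono ⟨0, hm⟩
  have hsum : Summable a :=
    summable_of_add_le_of_forall_le ha (fun k => (hdecrease ⟨0, hm⟩ k).1) hC
  exact (summable_mul_left_iff hρ0.ne').mp hsum

theorem armijo_sum_finite (m n : ℕ) (hm : 0 < m) (hn : 0 < n)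
    (Gl Gu : Fin m → EuclideanSpace ℝ (Fin n) → ℝ)
    (hGl : ∀ i, ContDiff ℝ 1 (Gl i)) (hGu : ∀ i, ContDiff ℝ 1 (Gu i))
    (hle : ∀ (i : Fin m) (x : EuclideanSpace ℝ (Fin n)), Gl i x ≤ Gu i x)
    (ρ : ℝ) (hρ0 : 0 < ρ) (hρ1 : ρ < 1)
    (x d : ℕ → EuclideanSpace ℝ (Fin n)) (t : ℕ → ℝ)
    (hx : ∀ k : ℕ, x (k+1) = x k + t k • d k)
    (hdesc : ∀ k : ℕ, psi m n Gl Gu (x k) (d k) < 0)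
    (ht : ∀ k : ℕ, 0 < t k ∧ ∀ i : Fin m,
      Gl i (x k + t k • d k) ≤ Gl i (x k) + ρ * t k * psi m n Gl Gu (x k) (d k) ∧
      Gu i (x k + t k • d k) ≤ Gu i (x k) + ρ * t k * psi m n Gl Gu (x k) (d k))
    (hA2 : AssumptionA2 m n Gl Gu (x 0)) :
    Summable (fun k : ℕ => t k * |psi m n Gl Gu (x k) (d k)|) :=
  armijo_sum_finite_general m n hm Gl Gu ρ hρ0 x d t hx hdesc ht hA2
end
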